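/- For every real a ≥ 1, the function h : ℝ → ℝ defined by h(x) = (a−1)·log(a² + x²) − 2x·arctan(x/a) is concave on ℝ; indeed its second derivative equals −(2(a−1)x² + 2(a+1)a²)/(a² + x²)², which is nonpositive for all x. -/

import Mathlib

open Real

section

variable {a : ℝ}

theorem hasDerivAt_log_sq_add_sq (ha : a ≠ 0) (x : ℝ) :
    HasDerivAt (fun x => log (a ^ 2 + x ^ 2)) (2 * x / (a ^ 2 + x ^ 2)) x := by
  have hx : a ^ 2 + x ^ 2 ≠ 0 := by positivity
  simpa using ((hasDerivAt_pow 2 x).const_add (a ^ 2)).log hx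

theorem hasDerivAt_arctan_div (ha : a ≠ 0) (x : ℝ) :
    HasDerivAt (fun x => arctan (x / a)) (a / (a ^ 2 + x ^ 2)) x := by
  refine ((hasDerivAt_id' x).div_const a).arctan.congr_deriv ?_
  field_simp

/-- The rational parts `(a - 1) · 2x / (a² + x²)` and `-2x · a / (a² + x²)` combine to
`-2x / (a² + x²)`. -/
theorem hasDerivAt_log_sub_mul_arctan (ha : a ≠ 0) (x : ℝ) :
    HasDerivAt (fun x => (a - 1) * log (a ^ 2 + x ^ 2) - 2 * x * arctan (x / a))
      (-2 * x / (a ^ 2 + x ^ 2) - 2 * arctan (x / a)) x := by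
  have hx : a ^ 2 + x ^ 2 ≠ 0 := by positivity
  refine (((hasDerivAt_log_sq_add_sq ha x).const_mul (a - 1)).sub
    (((hasDerivAt_id' x).const_mul 2).mul (hasDerivAt_arctan_div ha x))).congr_deriv ?_
  field_simp
  ring

theorem hasDerivAt_div_sq_add_sq_sub_arctan (ha : a ≠ 0) (x : ℝ) :
    HasDerivAt (fun x => -2 * x / (a ^ 2 + x ^ 2) - 2 * arctan (x / a))
      (-(2 * (a - 1) * x ^ 2 + 2 * (a + 1) * a ^ 2) / (a ^ 2 + x ^ 2) ^ 2) x := by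
  have hx : a ^ 2 + x ^ 2 ≠ 0 := by positivity
  have hnum : HasDerivAt (fun x : ℝ => -2 * x) (-2) x := by
    simpa using (hasDerivAt_id' x).const_mul (-2 : ℝ)
  have hden : HasDerivAt (fun x : ℝ => a ^ 2 + x ^ 2) (2 * x) x := by
    simpa using (hasDerivAt_pow 2 x).const_add (a ^ 2)
  refine ((hnum.div hden hx).sub ((hasDerivAt_arctan_div ha x).const_mul 2)).congr_deriv ?_
  field_simp
  ring

theorem neg_div_sq_add_sq_nonpos (ha : 1 ≤ a) (x : ℝ) :
    -(2 * (a - 1) * x ^ 2 + 2 * (a + 1) * a ^ 2) / (a ^ 2 + x ^ 2) ^ 2 ≤ 0 := by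
  apply div_nonpos_of_nonpos_of_nonneg _ (by positivity)
  have : 0 ≤ (a - 1) * x ^ 2 := mul_nonneg (by linarith) (sq_nonneg x)
  nlinarith [sq_nonneg a]

end

theorem deriv_deriv_eq_of_hasDerivAt {f f' f'' : ℝ → ℝ} (hf : ∀ x, HasDerivAt f (f' x) x)
    (hf' : ∀ x, HasDerivAt f' (f'' x) x) (x : ℝ) : deriv (deriv f) x = f'' x := by
  rw [funext fun y => (hf y).deriv]
  exact (hf' x).deriv

theorem concaveOn_univ_of_hasDerivAt2_nonpos {f f' f'' : ℝ → ℝ}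
    (hf : ∀ x, HasDerivAt f (f' x) x) (hf' : ∀ x, HasDerivAt f' (f'' x) x)
    (hf'' : ∀ x, f'' x ≤ 0) : ConcaveOn ℝ Set.univ f :=
  concaveOn_of_hasDerivWithinAt2_nonpos convex_univ
    (continuous_iff_continuousAt.2 fun x => (hf x).continuousAt).continuousOn
    (fun x _ => by simpa only [interior_univ, hasDerivWithinAt_univ] using hf x)
    (fun x _ => by simpa only [interior_univ, hasDerivWithinAt_univ] using hf' x)
    (fun x _ => hf'' x)

/-- For `a ≥ 1`, the function
`h(x) = (a−1)·log(a² + x²) − 2x·arctan(x/a)` is concave on ℝ, and its second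
derivative equals `−(2(a−1)x² + 2(a+1)a²)/(a² + x²)²`, which is nonpositive. -/
theorem stmt1 (a : ℝ) (ha : 1 ≤ a)
    (h : ℝ → ℝ)
    (hh : ∀ x : ℝ, h x = (a - 1) * Real.log (a ^ 2 + x ^ 2)
        - 2 * x * Real.arctan (x / a)) :
    ConcaveOn ℝ Set.univ h ∧
    ∀ x : ℝ,
      deriv (deriv h) x = -(2 * (a - 1) * x ^ 2 + 2 * (a + 1) * a ^ 2) / (a ^ 2 + x ^ 2) ^ 2 ∧
      -(2 * (a - 1) * x ^ 2 + 2 * (a + 1) * a ^ 2) / (a ^ 2 + x ^ 2) ^ 2 ≤ 0 := by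
  obtain rfl : h = _ := funext hh
  have ha0 : a ≠ 0 := by positivity
  have hf := hasDerivAt_log_sub_mul_arctan ha0
  have hf' := hasDerivAt_div_sq_add_sq_sub_arctan ha0
  exact ⟨concaveOn_univ_of_hasDerivAt2_nonpos hf hf' (neg_div_sq_add_sq_nonpos ha),
    fun x => ⟨deriv_deriv_eq_of_hasDerivAt hf hf' x, neg_div_sq_add_sq_nonpos ha x⟩⟩
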